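/- Let p be a prime, m a positive integer, q = p^m, and let f : 𝔽_q → 𝔽_p be a p-ary function. Then f(ax) = f(x) for all a ∈ 𝔽_p^* and all x ∈ 𝔽_q if and only if χ_β(D_{f,i}) is a rational integer (i.e., lies in ℤ ⊆ ℂ) for every i ∈ 𝔽_p and every β ∈ 𝔽_q. -/

import Mathlib

open Finset

noncomputable def zeta (p : ℕ) (a : ZMod p) : ℂ :=
  Complex.exp (2 * Real.pi * Complex.I / p) ^ a.val
def Dset {p : ℕ} {F : Type*} [Fintype F] (f : F → ZMod p) (i : ZMod p) : Finset F :=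
  Finset.univ.filter fun x => f x = i
noncomputable def chi (p : ℕ) {F : Type*} [CommRing F] [Algebra (ZMod p) F]
    (β : F) (D : Finset F) : ℂ :=
  ∑ α ∈ D, zeta p (Algebra.trace (ZMod p) F (β * α))

section Aux

variable (p : ℕ) [hp : Fact p.Prime]

lemma hzeta : IsPrimitiveRoot (Complex.exp (2 * Real.pi * Complex.I / p)) p :=
  Complex.isPrimitiveRoot_exp p hp.out.ne_zero

lemma zeta_zero : zeta p 0 = 1 := by
  simp [zeta, ZMod.val_zero]

lemma zeta_add (u v : ZMod p) : zeta p (u + v) = zeta p u * zeta p v := by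
  set ζ := Complex.exp (2 * Real.pi * Complex.I / p) with hζdef
  have h1 : ζ ^ p = 1 := (hzeta p).pow_eq_one
  unfold zeta
  rw [← pow_add, ZMod.val_add]
  conv_rhs => rw [← Nat.div_add_mod (u.val + v.val) p, pow_add, pow_mul, h1, one_pow, one_mul]

lemma zeta_sum : ∑ j : ZMod p, zeta p j = 0 := by
  have h : ∑ j : ZMod p, zeta p j = ∑ k ∈ Finset.range p,
      Complex.exp (2 * Real.pi * Complex.I / p) ^ k := by
    refine Finset.sum_nbij' (fun j => j.val) (fun k => (k : ZMod p)) ?_ ?_ ?_ ?_ ?_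
    · intro j _; exact Finset.mem_range.mpr (ZMod.val_lt j)
    · intro k _; exact Finset.mem_univ _
    · intro j _; exact ZMod.natCast_rightInverse j
    · intro k hk; exact ZMod.val_cast_of_lt (Finset.mem_range.mp hk)
    · intro j _; rfl
  rw [h]
  exact (hzeta p).geom_sum_eq_zero hp.out.one_lt

/-- The hard integrality direction: if `∑ c j ζ^j` is a rational integer then the
coefficients are constant on nonzero indices. -/
lemma lemA (c : ZMod p → ℤ) (n : ℤ)
    (h : ∑ j : ZMod p, (c j : ℂ) * zeta p j = (n : ℂ)) :
    ∀ j : ZMod p, j ≠ 0 → c j = c 1 := by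
  classical
  set ζ := Complex.exp (2 * Real.pi * Complex.I / p) with hζdef
  have hζ : IsPrimitiveRoot ζ p := hzeta p
  set Q : Polynomial ℚ :=
    (∑ j : ZMod p, Polynomial.C (c j : ℚ) * Polynomial.X ^ j.val) - Polynomial.C (n : ℚ) with hQ
  have hev : Polynomial.aeval ζ Q = 0 := by
    rw [hQ, map_sub, map_sum]
    simp only [map_mul, Polynomial.aeval_C, map_pow, Polynomial.aeval_X]
    have : ∀ j : ZMod p, (algebraMap ℚ ℂ) ((c j : ℚ)) * ζ ^ j.val = (c j : ℂ) * zeta p j := by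
      intro j; norm_cast
    simp only [this]
    rw [h]
    simp
  have hmin : minpoly ℚ ζ ∣ Q := minpoly.dvd ℚ ζ hev
  have hcyc : minpoly ℚ ζ = Polynomial.cyclotomic p ℚ :=
    (Polynomial.cyclotomic_eq_minpoly_rat hζ hp.out.pos).symm
  rw [hcyc] at hmin
  -- coefficient extraction
  have hval1 : (1 : ZMod p).val = 1 := ZMod.val_one_eq_one_mod p ▸ Nat.mod_eq_of_lt hp.out.one_lt
  have hcoeff : ∀ j : ZMod p, j ≠ 0 → Q.coeff j.val = (c j : ℚ) := by
    intro j hj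
    have hjval : j.val ≠ 0 := fun hh => hj ((ZMod.val_eq_zero j).mp hh)
    rw [hQ, Polynomial.coeff_sub, Polynomial.coeff_C, if_neg hjval, sub_zero,
      Polynomial.finset_sum_coeff]
    simp only [Polynomial.coeff_C_mul, Polynomial.coeff_X_pow]
    have : ∀ j' : ZMod p, (c j' : ℚ) * (if j.val = j'.val then (1:ℚ) else 0)
        = if j' = j then (c j' : ℚ) else 0 := by
      intro j'
      by_cases hjj : j' = j
      · simp [hjj]
      · rw [if_neg hjj, if_neg (fun hh => hjj (ZMod.val_injective p hh.symm)), mul_zero]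
    rw [Finset.sum_congr rfl (fun j' _ => this j'), Finset.sum_ite_eq' Finset.univ j]
    simp
  -- degree bound on Q
  have hdegQ : Q.natDegree ≤ p - 1 := by
    rw [hQ]
    apply le_trans (Polynomial.natDegree_sub_le _ _)
    rw [max_le_iff]
    constructor
    · apply Polynomial.natDegree_sum_le_of_forall_le
      intro j _
      apply le_trans (Polynomial.natDegree_C_mul_le _ _)
      rw [Polynomial.natDegree_X_pow]
      have := ZMod.val_lt j
      omega
    · simp
  have hdegC : (Polynomial.cyclotomic p ℚ).natDegree = p - 1 := by
    rw [Polynomial.natDegree_cyclotomic, Nat.totient_prime hp.out]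
  obtain ⟨R, hR⟩ := hmin
  -- show Q.coeff k = R.coeff 0 * 1 for all k ≤ p - 1; in particular constancy
  have hcoeffC : ∀ k : ℕ, k < p → (Polynomial.cyclotomic p ℚ).coeff k = 1 := by
    intro k hk
    rw [Polynomial.cyclotomic_prime ℚ p, Polynomial.finset_sum_coeff]
    simp only [Polynomial.coeff_X_pow]
    rw [Finset.sum_ite_eq (Finset.range p) k (fun _ => (1:ℚ)), if_pos (Finset.mem_range.mpr hk)]
  have hRconst : R = Polynomial.C (R.coeff 0) := by
    rcases eq_or_ne R 0 with h0 | h0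
    · rw [h0]; simp
    · have hQ0 : Q ≠ 0 := by
        rw [hR]
        exact mul_ne_zero (Polynomial.cyclotomic_ne_zero p ℚ) h0
      have := Polynomial.natDegree_mul (Polynomial.cyclotomic_ne_zero p ℚ) h0
      rw [← hR, hdegC] at this
      have hR0 : R.natDegree = 0 := by omega
      obtain ⟨r, hr⟩ := Polynomial.natDegree_eq_zero.mp hR0
      rw [← hr]; simp
  have hQcoeff : ∀ k : ℕ, k < p → Q.coeff k = R.coeff 0 := by
    intro k hk
    rw [hR, hRconst, mul_comm, Polynomial.coeff_C_mul, hcoeffC k hk, mul_one]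
    simp
  intro j hj
  have h1p : (1 : ZMod p) ≠ 0 := by
    intro hh
    have := ZMod.val_eq_zero (1 : ZMod p)
    rw [hval1] at this
    simpa [hh] using (this.mpr hh)
  have e1 : (c j : ℚ) = (c 1 : ℚ) := by
    rw [← hcoeff j hj, ← hcoeff 1 h1p, hQcoeff _ (ZMod.val_lt j), hQcoeff _ (ZMod.val_lt 1)]
  exact_mod_cast e1

lemma lemA' (c : ZMod p → ℤ) (hc : ∀ j : ZMod p, j ≠ 0 → c j = c 1) :
    ∑ j : ZMod p, (c j : ℂ) * zeta p j = ((c 0 - c 1 : ℤ) : ℂ) := by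
  classical
  have key : ∀ j : ZMod p, (c j : ℂ) * zeta p j
      = (c 1 : ℂ) * zeta p j + (if j = 0 then ((c 0 - c 1 : ℤ) : ℂ) else 0) := by
    intro j
    by_cases hj : j = 0
    · subst hj
      rw [if_pos rfl, zeta_zero]
      push_cast; ring
    · rw [hc j hj, if_neg hj, add_zero]
  rw [Finset.sum_congr rfl (fun j _ => key j), Finset.sum_add_distrib, ← Finset.mul_sum,
    zeta_sum, mul_zero, zero_add, Finset.sum_ite_eq' Finset.univ (0 : ZMod p), if_pos (Finset.mem_univ _)]

section Field

variable (F : Type*) [Field F] [Fintype F] [Algebra (ZMod p) F]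

local notation "T" => Algebra.trace (ZMod p) F

/-- fiberwise decomposition of a character sum over a finite set. -/
lemma chi_eq' (β : F) (D : Finset F) :
    ∑ α ∈ D, zeta p (T (β * α))
      = ∑ j : ZMod p, (((D.filter fun x => T (β * x) = j).card : ℤ) : ℂ) * zeta p j := by
  classical
  rw [← Finset.sum_fiberwise' D (fun α => T (β * α)) (zeta p)]
  refine Finset.sum_congr rfl fun j _ => ?_
  rw [Finset.sum_const, nsmul_eq_mul]
  norm_cast

lemma sum_zeta_trace : ∑ γ : F, zeta p (T γ) = 0 := by
  classical
  obtain ⟨z, hz⟩ := Algebra.trace_surjective (ZMod p) F 1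
  have hsurj : ∀ j : ZMod p, ∃ x : F, T x = j := by
    intro j
    exact ⟨j • z, by rw [map_smul, hz, smul_eq_mul, mul_one]⟩
  have hfib : ∀ j : ZMod p, (Finset.univ.filter fun γ : F => T γ = j).card
      = (Finset.univ.filter fun γ : F => T γ = 0).card := by
    intro j
    obtain ⟨xj, hxj⟩ := hsurj j
    refine Finset.card_nbij' (fun γ => γ - xj) (fun γ => γ + xj) ?_ ?_ ?_ ?_
    · intro γ hγ
      simp only [Finset.mem_coe, Finset.mem_filter, Finset.mem_univ, true_and] at hγ ⊢
      rw [map_sub, hγ, hxj, sub_self]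
    · intro γ hγ
      simp only [Finset.mem_coe, Finset.mem_filter, Finset.mem_univ, true_and] at hγ ⊢
      rw [map_add, hγ, hxj, zero_add]
    · intro γ _; simp
    · intro γ _; simp
  calc ∑ γ : F, zeta p (T γ)
      = ∑ j : ZMod p, ∑ γ ∈ Finset.univ.filter fun γ : F => T γ = j, zeta p j :=
        (Finset.sum_fiberwise' Finset.univ (fun γ => T γ) (zeta p)).symm
    _ = ∑ j : ZMod p, ((Finset.univ.filter fun γ : F => T γ = 0).card : ℂ) * zeta p j := by
        refine Finset.sum_congr rfl fun j _ => ?_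
        rw [Finset.sum_const, hfib j, nsmul_eq_mul]
    _ = 0 := by rw [← Finset.mul_sum, zeta_sum, mul_zero]

lemma sum_zeta_trace_mul (c : F) (hc : c ≠ 0) : ∑ β : F, zeta p (T (β * c)) = 0 := by
  exact (Equiv.sum_comp (Equiv.mulRight₀ c hc) (fun γ => zeta p (T γ))).trans
    (sum_zeta_trace p F)

lemma lemB (g : F → ℤ) (h : ∀ β : F, ∑ x : F, (g x : ℂ) * zeta p (T (β * x)) = 0) :
    ∀ y : F, g y = 0 := by
  classical
  intro y
  have key : ∑ β : F, ∑ x : F, (g x : ℂ) * (zeta p (T (β * x)) * zeta p (T (β * (-y)))) = 0 := by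
    refine Finset.sum_eq_zero fun β _ => ?_
    have := h β
    calc ∑ x : F, (g x : ℂ) * (zeta p (T (β * x)) * zeta p (T (β * (-y))))
        = (∑ x : F, (g x : ℂ) * zeta p (T (β * x))) * zeta p (T (β * (-y))) := by
          rw [Finset.sum_mul]; exact Finset.sum_congr rfl fun x _ => by ring
      _ = 0 := by rw [this, zero_mul]
  rw [Finset.sum_comm] at key
  have key2 : ∀ x : F, ∑ β : F, (g x : ℂ) * (zeta p (T (β * x)) * zeta p (T (β * (-y))))
      = (g x : ℂ) * (if x = y then (Fintype.card F : ℂ) else 0) := by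
    intro x
    rw [← Finset.mul_sum]
    congr 1
    have hz : ∀ β : F, zeta p (T (β * x)) * zeta p (T (β * (-y)))
        = zeta p (T (β * (x - y))) := by
      intro β
      rw [← zeta_add, ← map_add, ← mul_add]
      ring_nf
    rw [Finset.sum_congr rfl fun β _ => hz β]
    by_cases hxy : x = y
    · subst hxy
      rw [if_pos rfl]
      have h1 : ∀ β : F, zeta p (T (β * (x - x))) = 1 := fun β => by
        rw [sub_self, mul_zero, map_zero, zeta_zero]
      rw [Finset.sum_congr rfl fun β _ => h1 β, Finset.sum_const, nsmul_eq_mul, mul_one,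
        Finset.card_univ]
    · rw [if_neg hxy]
      exact sum_zeta_trace_mul p F (x - y) (sub_ne_zero.mpr hxy)
  rw [Finset.sum_congr rfl fun x _ => key2 x] at key
  simp only [mul_ite, mul_zero] at key
  rw [Finset.sum_ite_eq' Finset.univ y (fun x => (g x : ℂ) * (Fintype.card F : ℂ)),
    if_pos (Finset.mem_univ y)] at key
  have hcard0 : (Fintype.card F : ℂ) ≠ 0 := Nat.cast_ne_zero.mpr Fintype.card_ne_zero
  have : (g y : ℂ) = 0 := by
    rcases mul_eq_zero.mp key with h' | h'
    · exact h'
    · exact absurd h' hcard0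
  exact_mod_cast this

lemma htrace (s : ZMod p) (β y : F) :
    Algebra.trace (ZMod p) F (β * (algebraMap (ZMod p) F s * y)) =
      s * Algebra.trace (ZMod p) F (β * y) := by
  rw [mul_left_comm, ← Algebra.smul_def, map_smul, smul_eq_mul]

lemma card_bij_scale (f : F → ZMod p) (i : ZMod p) (β : F) (u : ZMod p) (hu : u ≠ 0)
    (j : ZMod p) :
    ((Dset (fun y => f (algebraMap (ZMod p) F u * y)) i).filter
        fun y => Algebra.trace (ZMod p) F (β * y) = j).card
      = ((Dset f i).filter fun z => Algebra.trace (ZMod p) F (β * z) = u * j).card := by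
  have halg : ∀ (s t : ZMod p) (x : F), algebraMap (ZMod p) F s * (algebraMap (ZMod p) F t * x)
      = algebraMap (ZMod p) F (s * t) * x := by
    intro s t x; rw [map_mul, mul_assoc]
  refine Finset.card_nbij' (fun y => algebraMap (ZMod p) F u * y)
    (fun z => algebraMap (ZMod p) F u⁻¹ * z) ?_ ?_ ?_ ?_
  · intro y hy
    simp only [Finset.mem_coe, Dset, Finset.mem_filter, Finset.mem_univ, true_and] at hy ⊢
    exact ⟨hy.1, by rw [htrace, hy.2]⟩
  · intro z hz
    simp only [Finset.mem_coe, Dset, Finset.mem_filter, Finset.mem_univ, true_and] at hz ⊢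
    constructor
    · rw [halg, mul_inv_cancel₀ hu, map_one, one_mul]; exact hz.1
    · rw [htrace, hz.2, ← mul_assoc, inv_mul_cancel₀ hu, one_mul]
  · intro y _
    simp only
    rw [halg, inv_mul_cancel₀ hu, map_one, one_mul]
  · intro z _
    simp only
    rw [halg, mul_inv_cancel₀ hu, map_one, one_mul]

end Field

end Aux

/-- Lemma 4.4, (i) ⇔ (iv). For a `p`-ary function `f : 𝔽_q → 𝔽_p`:
`f(ax) = f(x)` for all `a ∈ 𝔽_p^*`, `x ∈ 𝔽_q` if and only if `χ_β(D_{f,i})` is a rational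
integer for every `i ∈ 𝔽_p` and every `β ∈ 𝔽_q`. -/
theorem stmt_9 (p m : ℕ) [Fact p.Prime] (hm : 0 < m)
    (F : Type*) [Field F] [Fintype F] [Algebra (ZMod p) F]
    (hcard : Fintype.card F = p ^ m)
    (f : F → ZMod p) :
    (∀ (a : (ZMod p)ˣ) (x : F), f (algebraMap (ZMod p) F (a : ZMod p) * x) = f x) ↔
    (∀ (i : ZMod p) (β : F), ∃ n : ℤ, chi p β (Dset f i) = (n : ℂ)) := by
  constructor
  · intro hinv i β
    set c : ZMod p → ℤ := fun j =>
      (((Dset f i).filter fun x => Algebra.trace (ZMod p) F (β * x) = j).card : ℤ) with hc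
    have hconst : ∀ j : ZMod p, j ≠ 0 → c j = c 1 := by
      intro j hj
      have hDeq : Dset (fun y => f (algebraMap (ZMod p) F j * y)) i = Dset f i := by
        unfold Dset
        apply Finset.filter_congr
        intro y _
        have h2 := hinv (Units.mk0 j hj) y
        simp only [Units.val_mk0] at h2
        simp only [h2]
      have := card_bij_scale p F f i β j hj 1
      rw [hDeq, mul_one] at this
      simp only [hc]
      exact_mod_cast this.symm
    refine ⟨c 0 - c 1, ?_⟩
    have h1 : chi p β (Dset f i) = ∑ j : ZMod p, (c j : ℂ) * zeta p j :=
      chi_eq' p F β (Dset f i)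
    rw [h1]
    exact lemA' p c hconst
  · intro hchi a x
    set aF := algebraMap (ZMod p) F (a : ZMod p) with haF
    set i := f x with hi
    have hconst : ∀ (β : F) (j : ZMod p), j ≠ 0 →
        (((Dset f i).filter fun y => Algebra.trace (ZMod p) F (β * y) = j).card : ℤ)
          = (((Dset f i).filter fun y => Algebra.trace (ZMod p) F (β * y) = 1).card : ℤ) := by
      intro β j hj
      obtain ⟨n, hn⟩ := hchi i β
      unfold chi at hn
      rw [chi_eq' p F β (Dset f i)] at hn
      exact lemA p _ n hn j hj
    set g : F → ℤ := fun y => (if f (aF * y) = i then 1 else 0) - (if f y = i then 1 else 0)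
      with hg
    have ha0 : (a : ZMod p) ≠ 0 := a.ne_zero
    have hzero : ∀ β : F, ∑ y : F, (g y : ℂ) * zeta p (Algebra.trace (ZMod p) F (β * y)) = 0 := by
      intro β
      have hsplit : ∑ y : F, (g y : ℂ) * zeta p (Algebra.trace (ZMod p) F (β * y))
          = (∑ y : F, (if f (aF * y) = i then (1:ℂ) else 0) *
              zeta p (Algebra.trace (ZMod p) F (β * y)))
            - ∑ y : F, (if f y = i then (1:ℂ) else 0) *
              zeta p (Algebra.trace (ZMod p) F (β * y)) := by
        rw [← Finset.sum_sub_distrib]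
        refine Finset.sum_congr rfl fun y _ => ?_
        simp only [hg, Int.cast_sub]
        push_cast
        ring
      have hA : ∑ y : F, (if f (aF * y) = i then (1:ℂ) else 0) *
            zeta p (Algebra.trace (ZMod p) F (β * y))
          = ∑ α ∈ Dset (fun y => f (aF * y)) i, zeta p (Algebra.trace (ZMod p) F (β * α)) := by
        rw [Finset.sum_congr rfl fun y _ => (ite_mul _ _ _ _)]
        simp only [one_mul, zero_mul]
        rw [← Finset.sum_filter]
        rfl
      have hB : ∑ y : F, (if f y = i then (1:ℂ) else 0) *
            zeta p (Algebra.trace (ZMod p) F (β * y))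
          = ∑ α ∈ Dset f i, zeta p (Algebra.trace (ZMod p) F (β * α)) := by
        rw [Finset.sum_congr rfl fun y _ => (ite_mul _ _ _ _)]
        simp only [one_mul, zero_mul]
        rw [← Finset.sum_filter]
        rfl
      rw [hsplit, hA, hB, chi_eq' p F β (Dset (fun y => f (aF * y)) i), chi_eq' p F β (Dset f i),
        ← Finset.sum_sub_distrib]
      refine Finset.sum_eq_zero fun j _ => ?_
      rw [← sub_mul]
      have hcards : (((Dset (fun y => f (aF * y)) i).filter
            fun y => Algebra.trace (ZMod p) F (β * y) = j).card : ℤ)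
          = (((Dset f i).filter fun z => Algebra.trace (ZMod p) F (β * z) = j).card : ℤ) := by
        have h1 := card_bij_scale p F f i β (a : ZMod p) ha0 j
        rw [haF]
        rw [h1]
        by_cases hj : j = 0
        · rw [hj, mul_zero]
        · have haj : (a : ZMod p) * j ≠ 0 := mul_ne_zero ha0 hj
          rw [Int.natCast_inj.symm] at *
          exact (hconst β _ haj).trans (hconst β j hj).symm
      rw [hcards, sub_self, zero_mul]
    have hx := lemB p F g hzero x
    simp only [hg, hi] at hx ⊢
    by_cases hfx : f (aF * x) = f x
    · exact hfx
    · exfalso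
      rw [if_neg hfx] at hx
      simp at hx
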